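/- Let A ∈ ℝ^{n×d}, let t ≥ 0, and suppose that at most k entries of A have absolute value greater than t, i.e. |{(i,j) : |A_{ij}| > t}| ≤ k. Then there exists a matrix M ∈ ℝ^{n×d} with rank(M) ≤ k such that ‖A − M‖_F² ≤ n·d·t². -/

import Mathlib

/-!
Hard-threshold `A` at level `t`: keep the entries with `t < |A i j|` and zero out the rest.
The result has at most `k` nonzero entries, hence at most `k` nonzero rows and rank at most `k`,
while every entry of the error is either `0` or an entry of absolute value at most `t`.
-/

namespace Matrix

variable {m n R : Type*}

theorem rank_le_ncard_support [Fintype n] [Finite m] [CommSemiring R] [StrongRankCondition R]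
    (A : Matrix m n R) : A.rank ≤ {ij : m × n | A ij.1 ij.2 ≠ 0}.ncard := by
  classical
  have : Fintype m := Fintype.ofFinite m
  let S := {ij : m × n | A ij.1 ij.2 ≠ 0}.toFinset
  have hrows : Function.support A.row ⊆ S.image Prod.fst := by
    intro i hi
    obtain ⟨j, hj⟩ := Function.ne_iff.mp hi
    exact Finset.mem_image.mpr ⟨(i, j), by simpa [S] using hj, rfl⟩
  calc A.rank ≤ (S.image Prod.fst).card := A.rank_le_card_of_support_subset _ hrows
    _ ≤ S.card := Finset.card_image_le
    _ = _ := (Set.ncard_eq_toFinset_card' _).symm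

section HardThreshold

variable [CommRing R] [LinearOrder R]

def hardThreshold (t : R) (A : Matrix m n R) : Matrix m n R :=
  of fun i j => if t < |A i j| then A i j else 0

theorem hardThreshold_apply_ne_zero {t : R} {A : Matrix m n R} {i : m} {j : n}
    (h : hardThreshold t A i j ≠ 0) : t < |A i j| := by
  by_contra hle
  exact h (if_neg hle)

variable [IsStrictOrderedRing R]

theorem rank_hardThreshold_le [Fintype n] [Finite m] (t : R) (A : Matrix m n R) :
    (hardThreshold t A).rank ≤ {ij : m × n | t < |A ij.1 ij.2|}.ncard :=
  (rank_le_ncard_support _).trans <|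
    Set.ncard_le_ncard (fun _ => hardThreshold_apply_ne_zero) (Set.toFinite _)

theorem sq_sub_hardThreshold_apply_le (t : R) (A : Matrix m n R) (i : m) (j : n) :
    (A i j - hardThreshold t A i j) ^ 2 ≤ t ^ 2 := by
  by_cases h : t < |A i j|
  · simp [hardThreshold, h, sq_nonneg]
  · have hle : |A i j| ≤ t := not_lt.mp h
    simpa [hardThreshold, h, sq_le_sq] using hle.trans (le_abs_self t)

end HardThreshold

end Matrix

open Matrix in
theorem exists_low_rank_close_of_few_large_entries_general
    (n d k : ℕ) (A : Matrix (Fin n) (Fin d) ℝ) (t : ℝ)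
    (hfew : {ij : Fin n × Fin d | t < |A ij.1 ij.2|}.ncard ≤ k) :
    ∃ M : Matrix (Fin n) (Fin d) ℝ, M.rank ≤ k ∧
      ∑ i : Fin n, ∑ j : Fin d, (A i j - M i j) ^ 2 ≤ (n : ℝ) * d * t ^ 2 := by
  refine ⟨hardThreshold t A, (rank_hardThreshold_le t A).trans hfew, ?_⟩
  calc ∑ i : Fin n, ∑ j : Fin d, (A i j - hardThreshold t A i j) ^ 2
      ≤ ∑ _i : Fin n, ∑ _j : Fin d, t ^ 2 :=
        Finset.sum_le_sum fun i _ => Finset.sum_le_sum fun j _ =>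
          sq_sub_hardThreshold_apply_le t A i j
    _ = (n : ℝ) * d * t ^ 2 := by simp [mul_assoc]

/-- if at most k entries of A exceed t in absolute value, then A is
within squared Frobenius distance n·d·t² of a matrix of rank at most k. -/
theorem exists_low_rank_close_of_few_large_entries
    (n d k : ℕ) (A : Matrix (Fin n) (Fin d) ℝ) (t : ℝ) (ht : 0 ≤ t)
    (hfew : {ij : Fin n × Fin d | t < |A ij.1 ij.2|}.ncard ≤ k) :
    ∃ M : Matrix (Fin n) (Fin d) ℝ, M.rank ≤ k ∧
      ∑ i : Fin n, ∑ j : Fin d, (A i j - M i j) ^ 2 ≤ (n : ℝ) * d * t ^ 2 :=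
  exists_low_rank_close_of_few_large_entries_general n d k A t hfew
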